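/- Consider the Suslov system on ℝ⁵ with parameters I₁, I₂ > 0, I₁₃, I₂₃ ∈ ℝ and linear potential U(γ) = a₁γ₁ + a₂γ₂ + a₃γ₃. The scaling vector field û = ω₁∂/∂ω₁ + ω₂∂/∂ω₂ + 2γ₁∂/∂γ₁ + 2γ₂∂/∂γ₂ + 2γ₃∂/∂γ₃ satisfies [û, v] = v everywhere (v is the defining vector field), and the energy E = ½(I₁ω₁² + I₂ω₂²) + a₁γ₁ + a₂γ₂ + a₃γ₃ satisfies ⟨û, ∇E⟩ = 2E everywhere. -/

import Mathlib

/-!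
Give `ω` weight 1 and `γ` weight 2, and let `δₜ` be the weighted dilation
`(ω, γ) ↦ (t ω, t² γ)`, whose generator at `t = 1` is `û`. The Suslov field is weighted
homogeneous, `v (δₜ x) = t • δₜ (v x)`, and the energy satisfies `E (δₜ x) = t² E x`.
Differentiating these identities at `t = 1` (Euler's theorem) gives
`Dv(x)(û x) = v x + û (v x)` and `DE(x)(û x) = 2 E x`; since `û` is linear,
`[û, v] x = Dv(x)(û x) - û (v x) = v x`.
-/

open VectorField

/-- The Suslov system on ℝ⁵, coordinates `x = (ω₁, ω₂, γ₁, γ₂, γ₃)`, with parameters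
`I₁, I₂ > 0`, `I₁₃, I₂₃ ∈ ℝ` and the linear potential `U = a₁γ₁ + a₂γ₂ + a₃γ₃`:
`I₁ω̇₁ = −ω₂(I₁₃ω₁+I₂₃ω₂) + γ₂a₃ − γ₃a₂`, `I₂ω̇₂ = ω₁(I₁₃ω₁+I₂₃ω₂) + γ₃a₁ − γ₁a₃`,
`γ̇₁ = −γ₃ω₂`, `γ̇₂ = γ₃ω₁`, `γ̇₃ = γ₁ω₂ − γ₂ω₁`. -/
noncomputable def suslovLin (I₁ I₂ I₁₃ I₂₃ a₁ a₂ a₃ : ℝ) (x : Fin 5 → ℝ) : Fin 5 → ℝ :=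
  ![(-(x 1) * (I₁₃ * x 0 + I₂₃ * x 1) + x 3 * a₃ - x 4 * a₂) / I₁,
    ((x 0) * (I₁₃ * x 0 + I₂₃ * x 1) + x 4 * a₁ - x 2 * a₃) / I₂,
    -(x 4) * x 1,
    (x 4) * x 0,
    x 2 * x 1 - x 3 * x 0]

section WeightedHomogeneity

variable {ι : Type*} (w : ι → ℕ)

def weightedDilation (t : ℝ) (y : ι → ℝ) : ι → ℝ := fun i => t ^ w i * y i

noncomputable def eulerField : (ι → ℝ) →L[ℝ] ι → ℝ :=
  ContinuousLinearMap.pi fun i => (w i : ℝ) • ContinuousLinearMap.proj i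

@[simp] lemma eulerField_apply (y : ι → ℝ) (i : ι) : eulerField w y i = w i * y i := rfl

@[simp] lemma weightedDilation_one (y : ι → ℝ) : weightedDilation w 1 y = y := by
  ext i; simp [weightedDilation]

lemma hasDerivAt_weightedDilation_one (y : ι → ℝ) :
    HasDerivAt (fun t => weightedDilation w t y) (eulerField w y) 1 :=
  hasDerivAt_pi.2 fun i => by
    simpa [weightedDilation] using (hasDerivAt_pow (w i) (1 : ℝ)).mul_const (y i)

variable [Fintype ι] {F : Type*} [NormedAddCommGroup F] [NormedSpace ℝ F]

lemma fderiv_eulerField_eq_of_comp_weightedDilation {f : (ι → ℝ) → F} {x : ι → ℝ}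
    {g : ℝ → F} {g' : F} (hf : DifferentiableAt ℝ f x) (hg : HasDerivAt g g' 1)
    (hfg : ∀ t, f (weightedDilation w t x) = g t) :
    fderiv ℝ f x (eulerField w x) = g' := by
  have hcomp := ((weightedDilation_one w x).symm ▸ hf).hasFDerivAt.comp_hasDerivAt 1
    (hasDerivAt_weightedDilation_one w x)
  rw [weightedDilation_one] at hcomp
  exact hcomp.unique (by simpa [Function.comp_def, hfg] using hg)

lemma fderiv_eulerField_of_weightedDilation_eq_pow_smul {f : (ι → ℝ) → F}
    {x : ι → ℝ} {k : ℕ} (hf : DifferentiableAt ℝ f x)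
    (hfk : ∀ t, f (weightedDilation w t x) = t ^ k • f x) :
    fderiv ℝ f x (eulerField w x) = (k : ℝ) • f x :=
  fderiv_eulerField_eq_of_comp_weightedDilation w hf
    (by simpa using (hasDerivAt_pow k (1 : ℝ)).smul_const (f x)) hfk

lemma lieBracket_eulerField_of_weightedDilation_eq {v : (ι → ℝ) → ι → ℝ} {x : ι → ℝ} {k : ℕ}
    (hv : DifferentiableAt ℝ v x)
    (hvk : ∀ t, v (weightedDilation w t x) = t ^ k • weightedDilation w t (v x)) :
    lieBracket ℝ (eulerField w) v x = (k : ℝ) • v x := by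
  have hg := (hasDerivAt_pow k (1 : ℝ)).smul (hasDerivAt_weightedDilation_one w (v x))
  rw [lieBracket, ContinuousLinearMap.fderiv,
    fderiv_eulerField_eq_of_comp_weightedDilation w hv hg hvk]
  simp

end WeightedHomogeneity

def suslovWeights : Fin 5 → ℕ := ![1, 1, 2, 2, 2]

lemma eulerField_suslovWeights_apply (y : Fin 5 → ℝ) :
    eulerField suslovWeights y = ![y 0, y 1, 2 * y 2, 2 * y 3, 2 * y 4] := by
  ext i; fin_cases i <;> simp [suslovWeights]

section Suslov

variable (I₁ I₂ I₁₃ I₂₃ a₁ a₂ a₃ : ℝ)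

lemma differentiable_suslovLin : Differentiable ℝ (suslovLin I₁ I₂ I₁₃ I₂₃ a₁ a₂ a₃) := by
  unfold suslovLin Matrix.vecCons; fun_prop

lemma suslovLin_weightedDilation (t : ℝ) (x : Fin 5 → ℝ) :
    suslovLin I₁ I₂ I₁₃ I₂₃ a₁ a₂ a₃ (weightedDilation suslovWeights t x)
      = t • weightedDilation suslovWeights t (suslovLin I₁ I₂ I₁₃ I₂₃ a₁ a₂ a₃ x) := by
  ext i
  fin_cases i <;>
    simp only [suslovLin, weightedDilation, suslovWeights, Fin.isValue, Matrix.cons_val_zero,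
      Matrix.cons_val_one, Matrix.cons_val, Fin.mk_one, Fin.zero_eta, Fin.reduceFinMk,
      Pi.smul_apply, smul_eq_mul] <;>
    ring

noncomputable def suslovEnergy (y : Fin 5 → ℝ) : ℝ :=
  (1 / 2) * (I₁ * (y 0) ^ 2 + I₂ * (y 1) ^ 2) + a₁ * y 2 + a₂ * y 3 + a₃ * y 4

lemma differentiable_suslovEnergy : Differentiable ℝ (suslovEnergy I₁ I₂ a₁ a₂ a₃) := by
  unfold suslovEnergy; fun_prop

lemma suslovEnergy_weightedDilation (t : ℝ) (x : Fin 5 → ℝ) :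
    suslovEnergy I₁ I₂ a₁ a₂ a₃ (weightedDilation suslovWeights t x)
      = t ^ 2 • suslovEnergy I₁ I₂ a₁ a₂ a₃ x := by
  simp only [suslovEnergy, weightedDilation, suslovWeights, Matrix.cons_val, smul_eq_mul]
  ring

end Suslov

theorem suslov_scaling_symmetry_general
    (I₁ I₂ I₁₃ I₂₃ a₁ a₂ a₃ : ℝ) :
    (∀ x : Fin 5 → ℝ,
      VectorField.lieBracket ℝ (fun y => ![y 0, y 1, 2 * y 2, 2 * y 3, 2 * y 4])
          (suslovLin I₁ I₂ I₁₃ I₂₃ a₁ a₂ a₃) x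
        = suslovLin I₁ I₂ I₁₃ I₂₃ a₁ a₂ a₃ x) ∧
    (∀ x : Fin 5 → ℝ,
      fderiv ℝ (fun y : Fin 5 → ℝ =>
          (1 / 2) * (I₁ * (y 0) ^ 2 + I₂ * (y 1) ^ 2) + a₁ * y 2 + a₂ * y 3 + a₃ * y 4) x
          ![x 0, x 1, 2 * x 2, 2 * x 3, 2 * x 4]
        = 2 * ((1 / 2) * (I₁ * (x 0) ^ 2 + I₂ * (x 1) ^ 2)
            + a₁ * x 2 + a₂ * x 3 + a₃ * x 4)) := by
  refine ⟨fun x => ?_, fun x => ?_⟩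
  · have h := lieBracket_eulerField_of_weightedDilation_eq suslovWeights (k := 1)
      (differentiable_suslovLin I₁ I₂ I₁₃ I₂₃ a₁ a₂ a₃ x)
      fun t => by rw [pow_one]; exact suslovLin_weightedDilation I₁ I₂ I₁₃ I₂₃ a₁ a₂ a₃ t x
    rwa [funext eulerField_suslovWeights_apply, Nat.cast_one, one_smul] at h
  · have h := fderiv_eulerField_of_weightedDilation_eq_pow_smul suslovWeights
      (differentiable_suslovEnergy I₁ I₂ a₁ a₂ a₃ x)
      fun t => suslovEnergy_weightedDilation I₁ I₂ a₁ a₂ a₃ t x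
    rw [eulerField_suslovWeights_apply] at h
    exact h

/-- For the Suslov system with linear potential, the scaling vector field
`û = ω₁∂/∂ω₁ + ω₂∂/∂ω₂ + 2γ₁∂/∂γ₁ + 2γ₂∂/∂γ₂ + 2γ₃∂/∂γ₃` satisfies `[û, v] = v` everywhere,
and the energy `E = ½(I₁ω₁² + I₂ω₂²) + a₁γ₁ + a₂γ₂ + a₃γ₃` satisfies `⟨û, ∇E⟩ = 2E`. -/
theorem suslov_scaling_symmetry
    (I₁ I₂ I₁₃ I₂₃ a₁ a₂ a₃ : ℝ) (hI₁ : 0 < I₁) (hI₂ : 0 < I₂) :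
    (∀ x : Fin 5 → ℝ,
      VectorField.lieBracket ℝ (fun y => ![y 0, y 1, 2 * y 2, 2 * y 3, 2 * y 4])
          (suslovLin I₁ I₂ I₁₃ I₂₃ a₁ a₂ a₃) x
        = suslovLin I₁ I₂ I₁₃ I₂₃ a₁ a₂ a₃ x) ∧
    (∀ x : Fin 5 → ℝ,
      fderiv ℝ (fun y : Fin 5 → ℝ =>
          (1 / 2) * (I₁ * (y 0) ^ 2 + I₂ * (y 1) ^ 2) + a₁ * y 2 + a₂ * y 3 + a₃ * y 4) x
          ![x 0, x 1, 2 * x 2, 2 * x 3, 2 * x 4]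
        = 2 * ((1 / 2) * (I₁ * (x 0) ^ 2 + I₂ * (x 1) ^ 2)
            + a₁ * x 2 + a₂ * x 3 + a₃ * x 4)) :=
  suslov_scaling_symmetry_general I₁ I₂ I₁₃ I₂₃ a₁ a₂ a₃
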